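/- arXiv:1607.06058 — 2 statements merged into one kernel-verified Lean document; each statement's English description precedes it below -/
import Mathlib

section
/- Fix an integer q ≥ 1, β > 0, and colors c_ℓ, c_r, c_i, c_f in {1,…,q}. Define the single-site update probability p(c | c_ℓ, c_r) = (w_β/2)·([c = c_ℓ] + [c = c_r]) + b_β · g_{c_ℓ,c_r}(c) + κ_β/q, where g_{c_ℓ,c_r}(c) = [c = c_ℓ] if c_ℓ = c_r, and g_{c_ℓ,c_r}(c) = 1/q if c_ℓ ≠ c_r, and w_β, b_β, κ_β are the Potts parameters. Then p(c_f | c_ℓ, c_r) · exp(−β·([c_i ≠ c_ℓ] + [c_i ≠ c_r])) = p(c_i | c_ℓ, c_r) · exp(−β·([c_f ≠ c_ℓ] + [c_f ≠ c_r])), i.e. the single-site dynamics satisfies detailed balance with respect to the Gibbs weights of the one-dimensional Potts Hamiltonian. -/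
open Real

/-- The walk probability of the stochastic Potts model. -/
noncomputable def pottsW (q : ℕ) (β : ℝ) : ℝ :=
  2 * (exp β - 1) / ((q : ℝ) + 2 * (exp β - 1))

/-- The branch probability of the stochastic Potts model. -/
noncomputable def pottsB (q : ℕ) (β : ℝ) : ℝ :=
  (exp β - 1) ^ 2 * (q : ℝ) / ((exp (2 * β) - 1 + (q : ℝ)) * ((q : ℝ) + 2 * (exp β - 1)))

/-- The kill probability of the stochastic Potts model. -/
noncomputable def pottsK (q : ℕ) (β : ℝ) : ℝ :=
  (q : ℝ) / (exp (2 * β) + (q : ℝ) - 1)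

/-- Single-site update probability of color `c` given neighbor colors `cl, cr`:
with probability `w_β` copy a uniformly chosen neighbor, with probability `b_β`
use the boundary nucleation distribution `g_{cl,cr}` (uniform on all `q` colors
if the neighbors disagree, the common color otherwise), with probability `κ_β`
pick a uniform color. -/
noncomputable def pottsUpdate (q : ℕ) (β : ℝ) (c cl cr : Fin q) : ℝ :=
  pottsW q β / 2 * ((if c = cl then (1 : ℝ) else 0) + (if c = cr then (1 : ℝ) else 0))
    + pottsB q β * (if cl = cr then (if c = cl then (1 : ℝ) else 0) else 1 / (q : ℝ))
    + pottsK q β / (q : ℝ)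

/-!
Writing `s = e^β`, the update probability of a color `c` factors as
`p(c | cl, cr) = a(cl, cr) · s^{m(c)}`, where `m(c) = [c = cl] + [c = cr]` counts the neighbors
agreeing with `c` and `a = 1 / (s² + q - 1)` if `cl = cr`, `a = 1 / (q + 2(s - 1))` otherwise.
Since the Potts energy of `c` is `2 - m(c)`, the kernel is proportional to the Gibbs weight
`s^{m(c)}`, which is detailed balance.
-/

section DetailedBalance

variable {α : Type*}

theorem detailed_balance_of_eq_mul_exp {f m : α → ℝ} {A β : ℝ}
    (hf : ∀ c, f c = A * exp (β * m c)) (n : ℝ) (x y : α) :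
    f x * exp (-β * (n - m y)) = f y * exp (-β * (n - m x)) := by
  rw [hf, hf, mul_assoc, mul_assoc, ← exp_add, ← exp_add]
  ring_nf

def agreeCount [DecidableEq α] (c cl cr : α) : ℝ :=
  (if c = cl then 1 else 0) + (if c = cr then 1 else 0)

theorem disagreeCount_eq_two_sub_agreeCount [DecidableEq α] (c cl cr : α) :
    ((if c ≠ cl then (1 : ℝ) else 0) + (if c ≠ cr then (1 : ℝ) else 0)) =
      2 - agreeCount c cl cr := by
  simp only [agreeCount, ite_not]
  split_ifs <;> norm_num

end DetailedBalance

section PottsParameters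

variable {q : ℕ} {β : ℝ}

theorem pottsW_div_two : pottsW q β / 2 = (exp β - 1) * ((q : ℝ) + 2 * (exp β - 1))⁻¹ := by
  rw [pottsW]; ring

theorem pottsK_div (hq : (q : ℝ) ≠ 0) : pottsK q β / q = (exp (2 * β) + q - 1)⁻¹ := by
  rw [pottsK]; field_simp

theorem pottsB_eq (h₁ : (q : ℝ) + 2 * (exp β - 1) ≠ 0) (h₂ : exp (2 * β) + q - 1 ≠ 0) :
    pottsB q β = q * (((q : ℝ) + 2 * (exp β - 1))⁻¹ - (exp (2 * β) + q - 1)⁻¹) := by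
  have h₂' : exp (2 * β) - 1 + q ≠ 0 := by rwa [sub_add_eq_add_sub]
  rw [pottsB, inv_sub_inv h₁ h₂, mul_div_assoc', div_eq_div_iff (by positivity) (by positivity),
    show exp (2 * β) = exp β ^ 2 by rw [sq, ← exp_add, two_mul]]
  ring

theorem pottsUpdate_eq_mul_exp (hq : 0 < q) (hβ : 0 ≤ β) (c cl cr : Fin q) :
    pottsUpdate q β c cl cr =
      (if cl = cr then (exp (2 * β) + q - 1)⁻¹ else ((q : ℝ) + 2 * (exp β - 1))⁻¹) *
        exp (β * agreeCount c cl cr) := by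
  have hq' : (q : ℝ) ≠ 0 := (Nat.cast_pos.mpr hq).ne'
  have hs : 1 ≤ exp β := one_le_exp hβ
  have h₁ : (q : ℝ) + 2 * (exp β - 1) ≠ 0 := by positivity
  have h₂ : exp (2 * β) + q - 1 ≠ 0 := by
    have : (1 : ℝ) ≤ q := Nat.one_le_cast.mpr hq
    have := one_le_exp (by positivity : 0 ≤ 2 * β)
    exact (by linarith : (0 : ℝ) < _).ne'
  have hqinv := mul_inv_cancel₀ hq'
  rw [pottsUpdate, pottsW_div_two, pottsK_div hq', pottsB_eq h₁ h₂, agreeCount]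
  set u := ((q : ℝ) + 2 * (exp β - 1))⁻¹
  set v := (exp (2 * β) + q - 1)⁻¹
  have hu : ((q : ℝ) + 2 * (exp β - 1)) * u = 1 := mul_inv_cancel₀ h₁
  have hv : (exp (2 * β) + q - 1) * v = 1 := mul_inv_cancel₀ h₂
  rcases eq_or_ne cl cr with rfl | hlr
  · by_cases hc : c = cl
    · simp only [hc, if_true, mul_comm β, one_add_one_eq_two]
      linear_combination hu - hv
    · simp [hc]
  · simp only [if_neg hlr]
    split_ifs with hcl hcr hcr
    · exact absurd (hcl.symm.trans hcr) hlr
    all_goals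
      simp only [add_zero, zero_add, mul_one, mul_zero, exp_zero, one_div]
      linear_combination (u - v) * hqinv

end PottsParameters

/-- Detailed balance of the single-site Potts dynamics with respect to the
Gibbs weights of the one-dimensional Potts Hamiltonian. -/
theorem potts_detailed_balance (q : ℕ) (hq : 1 ≤ q) (β : ℝ) (hβ : 0 < β)
    (cl cr ci cf : Fin q) :
    pottsUpdate q β cf cl cr *
        exp (-β * ((if ci ≠ cl then (1 : ℝ) else 0) + (if ci ≠ cr then (1 : ℝ) else 0)))
      = pottsUpdate q β ci cl cr *
        exp (-β * ((if cf ≠ cl then (1 : ℝ) else 0) + (if cf ≠ cr then (1 : ℝ) else 0))) := by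
  rw [disagreeCount_eq_two_sub_agreeCount, disagreeCount_eq_two_sub_agreeCount]
  exact detailed_balance_of_eq_mul_exp (fun c ↦ pottsUpdate_eq_mul_exp hq hβ.le c cl cr) 2 cf ci
end

section
/- Let G = (V,E) be a finite rooted DAG in which every vertex has out-degree at most 2 and every non-leaf vertex has a path to a leaf. Call an intermediate vertex z (neither the root nor a leaf) 'relevant' if there exist two paths of G through z reaching leaves that do not meet strictly between z and the leaves, and 'irrelevant' otherwise. Let G̃ be the reduced graph whose vertex set Ṽ consists of the root, the leaves, and the relevant vertices, with a directed edge from z to z' in G̃ iff there is a path z = z₁, …, z_n = z' in G with z_i irrelevant for 1 < i < n. Then for any leaf coloring c₀ and any merge function F with F(v,c,c) = c, the unique coloring of G and the unique coloring of G̃ (using the same values F(v,·,·) at shared vertices) agree on every vertex of Ṽ. -/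
/-- Edge relation of a DAG whose out-neighbors are given by
`child : V → Option (V ⊕ V × V)`. -/
def childEdge {V : Type} (child : V → Option (V ⊕ V × V)) (v w : V) : Prop :=
  child v = some (Sum.inl w) ∨ (∃ w₂, child v = some (Sum.inr (w, w₂))) ∨
    (∃ w₁, child v = some (Sum.inr (w₁, w)))

/-- `p` is a path of the DAG starting at `z` and ending at a leaf. -/
def IsLeafPath {V : Type} (child : V → Option (V ⊕ V × V)) (z : V) (p : List V) : Prop :=
  p.head? = some z ∧ List.Chain' (childEdge child) p ∧
    ∃ l, p.getLast? = some l ∧ child l = none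

/-- An intermediate vertex `z` (neither the root `r` nor a leaf) is relevant if
two paths of the graph from `z` to the leaves do not meet strictly after `z`. -/
def Relevant {V : Type} (child : V → Option (V ⊕ V × V)) (r z : V) : Prop :=
  z ≠ r ∧ child z ≠ none ∧
    ∃ p q : List V, IsLeafPath child z p ∧ IsLeafPath child z q ∧
      ∀ v, v ∈ p.tail → v ∉ q.tail

/-- Vertices of the reduced graph: the root, the leaves, and the relevant
separation points. -/
def ReducedVertex {V : Type} (child : V → Option (V ⊕ V × V)) (r v : V) : Prop :=
  v = r ∨ child v = none ∨ Relevant child r v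

/-- `z'` is the reduced vertex reached from `w` by following a path all of
whose vertices before `z'` are irrelevant: this encodes the edges of the
reduced graph (`v` connects to `z'` in the reduced graph iff some child `w` of
`v` satisfies `ReachReduced child r w z'`). -/
def ReachReduced {V : Type} (child : V → Option (V ⊕ V × V)) (r w z' : V) : Prop :=
  ReducedVertex child r z' ∧
    ∃ p : List V, p.head? = some w ∧ p.getLast? = some z' ∧
      List.Chain' (childEdge child) p ∧ ∀ v ∈ p.dropLast, ¬ ReducedVertex child r v

/-!
Call `a` and `b` *meeting* if every leaf path from `a` meets every leaf path from `b`. Meeting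
vertices have the same color, by induction over the DAG: if `b` does not reach `a`, every child
of `a` still meets `b`, and `F v c c = c` passes the common color up to `a`; otherwise `a` does
not reach `b` (acyclicity) and the roles swap. At an irrelevant vertex any two children meet, so
an irrelevant vertex has the color of each of its children. Colors are therefore constant along
the paths of `G` that realise the edges of the reduced graph, and the two colorings agree on the
reduced vertices by induction over the DAG.
-/

open Relation

theorem wellFounded_flip_transGen_of_acyclic {α : Type} [Finite α] {R : α → α → Prop}
    (hacyc : ∀ a, ¬ TransGen R a a) : WellFounded (flip (TransGen R)) :=
  haveI : IsTrans α (flip (TransGen R)) := ⟨fun _ _ _ h₁ h₂ => h₂.trans h₁⟩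
  haveI : Std.Irrefl (flip (TransGen R)) := ⟨hacyc⟩
  Finite.wellFounded_of_trans_of_irrefl _

namespace List

theorem IsChain.reflTransGen_of_mem {α : Type} {R : α → α → Prop} {l : List α} {a u : α}
    (hl : l.IsChain R) (ha : l.head? = some a) (hu : u ∈ l) : ReflTransGen R a u :=
  hl.induction (ReflTransGen R a ·) l (fun _ _ hxy hx => hx.tail hxy)
    (fun hne => by rw [head?_eq_some_head hne, Option.some_inj] at ha; rw [ha]) u hu

theorem IsChain.reflTransGen_of_forall_mem_dropLast {α : Type} {R : α → α → Prop}
    {S : α → Prop} : ∀ {l : List α} {a b : α}, l.head? = some a → l.getLast? = some b →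
      l.IsChain R → (∀ x ∈ l.dropLast, S x) → ReflTransGen (fun x y => S x ∧ R x y) a b
  | [], _, _, ha, _, _, _ => by simp at ha
  | [x], _, _, ha, hb, _, _ => by
    simp only [head?_cons, getLast?_singleton, Option.some_inj] at ha hb
    exact ha ▸ hb ▸ .refl
  | x :: y :: l, a, b, ha, hb, hl, hS => by
    obtain rfl : x = a := by simpa using ha
    rw [isChain_cons_cons] at hl
    refine ReflTransGen.head ⟨hS x (by simp), hl.1⟩ ?_
    exact hl.2.reflTransGen_of_forall_mem_dropLast rfl (by simpa using hb) fun z hz =>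
      hS z (by rw [dropLast_cons_cons]; exact mem_cons_of_mem x hz)

end List

section Coloring

variable {V : Type} {child : V → Option (V ⊕ V × V)}

theorem childEdge_iff_of_inl {v w x : V} (h : child v = some (Sum.inl w)) :
    childEdge child v x ↔ x = w := by
  simp [childEdge, h, eq_comm]

theorem childEdge_iff_of_inr {v w₁ w₂ x : V} (h : child v = some (Sum.inr (w₁, w₂))) :
    childEdge child v x ↔ x = w₁ ∨ x = w₂ := by
  simp [childEdge, h, eq_comm]

theorem child_ne_none_of_childEdge {v w : V} (h : childEdge child v w) : child v ≠ none := by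
  rcases h with h | ⟨_, h⟩ | ⟨_, h⟩ <;> simp [h]

theorem exists_childEdge_of_ne_none {v : V} (h : child v ≠ none) : ∃ w, childEdge child v w := by
  rcases hv : child v with - | w | ⟨w₁, w₂⟩
  · exact absurd hv h
  · exact ⟨w, Or.inl hv⟩
  · exact ⟨w₁, Or.inr (Or.inl ⟨w₂, hv⟩)⟩

theorem color_eq_of_forall_childEdge {C : Type} {F : V → C → C → C} (hF : ∀ v c, F v c c = c)
    {θ : V → C} (hθ2 : ∀ v w, child v = some (Sum.inl w) → θ v = θ w)
    (hθ3 : ∀ v w₁ w₂, child v = some (Sum.inr (w₁, w₂)) → θ v = F v (θ w₁) (θ w₂))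
    {v : V} {c : C} (hv : child v ≠ none) (h : ∀ w, childEdge child v w → θ w = c) :
    θ v = c := by
  rcases hcv : child v with - | w | ⟨w₁, w₂⟩
  · exact absurd hcv hv
  · rw [hθ2 v w hcv, h w ((childEdge_iff_of_inl hcv).2 rfl)]
  · rw [hθ3 v w₁ w₂ hcv, h w₁ ((childEdge_iff_of_inr hcv).2 (.inl rfl)),
      h w₂ ((childEdge_iff_of_inr hcv).2 (.inr rfl)), hF]

namespace IsLeafPath

theorem singleton {v : V} (h : child v = none) : IsLeafPath child v [v] :=
  ⟨rfl, List.isChain_singleton v, v, rfl, h⟩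

theorem cons {v w : V} {p : List V} (he : childEdge child v w) (h : IsLeafPath child w p) :
    IsLeafPath child v (v :: p) := by
  obtain ⟨hw, hp, l, hl, hleaf⟩ := h
  obtain ⟨p, rfl⟩ := List.head?_eq_some_iff.1 hw
  exact ⟨rfl, List.isChain_cons_cons.2 ⟨he, hp⟩, l, by rwa [List.getLast?_cons_cons], hleaf⟩

theorem reflTransGen_of_mem {z u : V} {p : List V} (h : IsLeafPath child z p) (hu : u ∈ p) :
    ReflTransGen (childEdge child) z u :=
  h.2.1.reflTransGen_of_mem h.1 hu

end IsLeafPath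

theorem exists_isLeafPath [Finite V] (hacyc : ∀ v, ¬ TransGen (childEdge child) v v) (v : V) :
    ∃ p, IsLeafPath child v p := by
  induction v using (wellFounded_flip_transGen_of_acyclic hacyc).induction with
  | _ v ih =>
  by_cases hv : child v = none
  · exact ⟨[v], .singleton hv⟩
  · obtain ⟨w, he⟩ := exists_childEdge_of_ne_none hv
    obtain ⟨p, hp⟩ := ih w (.single he)
    exact ⟨v :: p, hp.cons he⟩

variable (child) in
def LeafPathsMeet (a b : V) : Prop :=
  ∀ p q, IsLeafPath child a p → IsLeafPath child b q → ∃ u ∈ p, u ∈ q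

namespace LeafPathsMeet

theorem symm {a b : V} (h : LeafPathsMeet child a b) : LeafPathsMeet child b a :=
  fun p q hp hq => (h q p hq hp).imp fun _ hu => ⟨hu.2, hu.1⟩

theorem of_childEdge {a b x : V} (h : LeafPathsMeet child a b)
    (hba : ¬ ReflTransGen (childEdge child) b a) (he : childEdge child a x) :
    LeafPathsMeet child x b := by
  intro p q hp hq
  obtain ⟨u, hu, huq⟩ := h _ q (hp.cons he) hq
  rcases List.mem_cons.1 hu with rfl | hu
  · exact absurd (hq.reflTransGen_of_mem huq) hba
  · exact ⟨u, hu, huq⟩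

theorem reflTransGen_of_child_eq_none {a b : V} {q : List V} (h : LeafPathsMeet child a b)
    (ha : child a = none) (hq : IsLeafPath child b q) : ReflTransGen (childEdge child) b a := by
  obtain ⟨u, hu, huq⟩ := h [a] q (.singleton ha) hq
  rw [List.mem_singleton.1 hu] at huq
  exact hq.reflTransGen_of_mem huq

end LeafPathsMeet

namespace ReachReduced

theorem cons {r w x z : V} (hw : ¬ ReducedVertex child r w) (he : childEdge child w x)
    (h : ReachReduced child r x z) : ReachReduced child r w z := by
  obtain ⟨hz, p, hx, hpz, hp, hirr⟩ := h
  obtain ⟨p, rfl⟩ := List.head?_eq_some_iff.1 hx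
  refine ⟨hz, w :: x :: p, rfl, by rwa [List.getLast?_cons_cons],
    List.isChain_cons_cons.2 ⟨he, hp⟩, ?_⟩
  rw [List.dropLast_cons_cons]
  rintro v (_ | ⟨_, hv⟩)
  exacts [hw, hirr v hv]

theorem reflTransGen {r w z : V} (h : ReachReduced child r w z) :
    ReflTransGen (fun x y => ¬ ReducedVertex child r x ∧ childEdge child x y) w z :=
  have ⟨_, _, hw, hz, hp, hirr⟩ := h
  hp.reflTransGen_of_forall_mem_dropLast hw hz hirr

theorem transGen_of_childEdge {r v w z : V} (he : childEdge child v w)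
    (h : ReachReduced child r w z) : TransGen (childEdge child) v z :=
  TransGen.head' he (h.reflTransGen.lift id fun _ _ hxy => hxy.2)

end ReachReduced

theorem exists_reachReduced [Finite V] (hacyc : ∀ v, ¬ TransGen (childEdge child) v v)
    (r w : V) : ∃ z, ReachReduced child r w z := by
  induction w using (wellFounded_flip_transGen_of_acyclic hacyc).induction with
  | _ w ih =>
  by_cases hw : ReducedVertex child r w
  · exact ⟨w, hw, [w], rfl, rfl, List.isChain_singleton w, by simp⟩
  · obtain ⟨x, he⟩ := exists_childEdge_of_ne_none fun h => hw (.inr (.inl h))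
    obtain ⟨z, hz⟩ := ih x (.single he)
    exact ⟨z, hz.cons hw he⟩

theorem leafPathsMeet_of_not_relevant {r z y₁ y₂ : V} (hzr : z ≠ r) (hz : ¬ Relevant child r z)
    (h₁ : childEdge child z y₁) (h₂ : childEdge child z y₂) : LeafPathsMeet child y₁ y₂ := by
  intro p q hp hq
  by_contra hpq
  exact hz ⟨hzr, child_ne_none_of_childEdge h₁, z :: p, z :: q, hp.cons h₁, hq.cons h₂,
    fun u hu huq => hpq ⟨u, hu, huq⟩⟩

section Meet

variable [Finite V] (hacyc : ∀ v, ¬ TransGen (childEdge child) v v) {C : Type} {θ : V → C}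
  (hθ : ∀ v c, child v ≠ none → (∀ w, childEdge child v w → θ w = c) → θ v = c)

include hacyc hθ

theorem color_eq_of_leafPathsMeet_of_not_reflTransGen {a b : V} (h : LeafPathsMeet child a b)
    (hba : ¬ ReflTransGen (childEdge child) b a)
    (ih : ∀ x, childEdge child a x → LeafPathsMeet child x b → θ x = θ b) : θ a = θ b := by
  obtain ⟨q, hq⟩ := exists_isLeafPath hacyc b
  have ha : child a ≠ none := fun ha => hba (h.reflTransGen_of_child_eq_none ha hq)
  exact hθ a (θ b) ha fun x hx => ih x hx (h.of_childEdge hba hx)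

theorem color_eq_of_leafPathsMeet {a b : V} (h : LeafPathsMeet child a b) : θ a = θ b := by
  have hwf := wellFounded_flip_transGen_of_acyclic hacyc
  induction a using hwf.induction generalizing b with
  | _ a iha =>
  induction b using hwf.induction with
  | _ b ihb =>
  by_cases hba : ReflTransGen (childEdge child) b a
  · rcases reflTransGen_iff_eq_or_transGen.1 hba with rfl | hba
    · rfl
    have hab : ¬ ReflTransGen (childEdge child) a b := fun hab => hacyc b (hba.trans_left hab)
    exact (color_eq_of_leafPathsMeet_of_not_reflTransGen hacyc hθ h.symm hab
      fun y hy hm => (ihb y (.single hy) hm.symm).symm).symm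
  · exact color_eq_of_leafPathsMeet_of_not_reflTransGen hacyc hθ h hba
      fun x hx hm => iha x (.single hx) hm

theorem color_eq_of_childEdge_of_not_reducedVertex {r v w : V}
    (hv : ¬ ReducedVertex child r v) (he : childEdge child v w) : θ v = θ w := by
  simp only [ReducedVertex, not_or] at hv
  obtain ⟨hvr, hvc, hrel⟩ := hv
  exact hθ v (θ w) hvc fun y hy =>
    color_eq_of_leafPathsMeet hacyc hθ (leafPathsMeet_of_not_relevant hvr hrel hy he)

theorem ReachReduced.color_eq {r w z : V} (h : ReachReduced child r w z) : θ w = θ z := by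
  have hwz := h.reflTransGen
  clear h
  induction hwz with
  | refl => rfl
  | tail _ hxy ih =>
    exact ih.trans (color_eq_of_childEdge_of_not_reducedVertex hacyc hθ hxy.1 hxy.2)

end Meet

end Coloring

theorem reduced_graph_coloring_general {V C : Type} [Fintype V]
    (child : V → Option (V ⊕ V × V)) (r : V)
    (hacyc : ∀ v, ¬ Relation.TransGen (childEdge child) v v)
    (c₀ : V → C) (F : V → C → C → C) (hF : ∀ v c, F v c c = c)
    (θ θr : V → C)
    (hθ1 : ∀ v, child v = none → θ v = c₀ v)
    (hθ2 : ∀ v w, child v = some (Sum.inl w) → θ v = θ w)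
    (hθ3 : ∀ v w₁ w₂, child v = some (Sum.inr (w₁, w₂)) → θ v = F v (θ w₁) (θ w₂))
    (hr1 : ∀ v, child v = none → θr v = c₀ v)
    (hr2 : ∀ v w z', ReducedVertex child r v → child v = some (Sum.inl w) →
      ReachReduced child r w z' → θr v = θr z')
    (hr3 : ∀ v w₁ w₂ z₁ z₂, ReducedVertex child r v → child v = some (Sum.inr (w₁, w₂)) →
      ReachReduced child r w₁ z₁ → ReachReduced child r w₂ z₂ →
      θr v = F v (θr z₁) (θr z₂)) :
    ∀ v, ReducedVertex child r v → θr v = θ v := by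
  have hθ := fun v c => color_eq_of_forall_childEdge hF hθ2 hθ3 (v := v) (c := c)
  intro v
  induction v using (wellFounded_flip_transGen_of_acyclic hacyc).induction with
  | _ v ih =>
  intro hv
  have hreach : ∀ w z, childEdge child v w → ReachReduced child r w z → θr z = θ w :=
    fun w z he hz => (ih z (hz.transGen_of_childEdge he) hz.1).trans (hz.color_eq hacyc hθ).symm
  rcases hcv : child v with - | w | ⟨w₁, w₂⟩
  · rw [hr1 v hcv, hθ1 v hcv]
  · obtain ⟨z, hz⟩ := exists_reachReduced hacyc r w
    rw [hr2 v w z hv hcv hz, hreach w z (.inl hcv) hz, hθ2 v w hcv]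
  · obtain ⟨z₁, hz₁⟩ := exists_reachReduced hacyc r w₁
    obtain ⟨z₂, hz₂⟩ := exists_reachReduced hacyc r w₂
    rw [hr3 v w₁ w₂ z₁ z₂ hv hcv hz₁ hz₂, hreach w₁ z₁ (.inr (.inl ⟨w₂, hcv⟩)) hz₁,
      hreach w₂ z₂ (.inr (.inr ⟨w₁, hcv⟩)) hz₂, hθ3 v w₁ w₂ hcv]

/-- Proposition 1.4: the coloring algorithm applied to a finite rooted DAG and
to its reduced graph (skipping all irrelevant vertices) induce the same
coloring on the vertices of the reduced graph. -/
theorem reduced_graph_coloring {V C : Type} [Fintype V]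
    (child : V → Option (V ⊕ V × V)) (r : V)
    (hacyc : ∀ v, ¬ Relation.TransGen (childEdge child) v v)
    (hleaf : ∀ v, child v ≠ none →
      ∃ l, child l = none ∧ Relation.ReflTransGen (childEdge child) v l)
    (c₀ : V → C) (F : V → C → C → C) (hF : ∀ v c, F v c c = c)
    (θ θr : V → C)
    (hθ1 : ∀ v, child v = none → θ v = c₀ v)
    (hθ2 : ∀ v w, child v = some (Sum.inl w) → θ v = θ w)
    (hθ3 : ∀ v w₁ w₂, child v = some (Sum.inr (w₁, w₂)) → θ v = F v (θ w₁) (θ w₂))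
    (hr1 : ∀ v, child v = none → θr v = c₀ v)
    (hr2 : ∀ v w z', ReducedVertex child r v → child v = some (Sum.inl w) →
      ReachReduced child r w z' → θr v = θr z')
    (hr3 : ∀ v w₁ w₂ z₁ z₂, ReducedVertex child r v → child v = some (Sum.inr (w₁, w₂)) →
      ReachReduced child r w₁ z₁ → ReachReduced child r w₂ z₂ →
      θr v = F v (θr z₁) (θr z₂)) :
    ∀ v, ReducedVertex child r v → θr v = θ v :=
  reduced_graph_coloring_general child r hacyc c₀ F hF θ θr hθ1 hθ2 hθ3 hr1 hr2 hr3
end
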